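/- Let f : ℝⁿ → ℝⁿ be twice continuously differentiable with Df(x₀) invertible, M = ‖(Df(x₀))⁻¹‖, and K an upper bound on ‖D²f‖ over B(x₀,R). Let W ⊂ ℝⁿ be a linear subspace and M_W = sup{‖(Df(x₀))⁻¹ w‖ : w ∈ W, ‖w‖ ≤ 1}. Then for any 0 < r_x < min{1/(MK), R} and r_W = r_x(2 − r_x M K)/(2 M_W), for each y with y − f(x₀) ∈ W and ‖y − f(x₀)‖ < r_W, there exists a unique x_y ∈ B(x₀, r_x) with f(x_y) = y. -/

import Mathlib

/-!
Solving `f x = y` is finding a fixed point of the simplified Newton map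
`g x = x + A⁻¹ (y - f x)`, where `A = Df(x₀)`. Its derivative `A⁻¹ (A - Df(z))` has norm at most
`M K ‖z - x₀‖`, so `g` is a contraction with constant `M K r_x < 1` on `B̄(x₀, r_x)`. Integrating
this linearly growing bound along segments from `x₀` gives `‖g x - g x₀‖ ≤ (M K / 2) ‖x - x₀‖²`,
and since `‖g x₀ - x₀‖ ≤ M_W ‖y - f x₀‖ < r_x (2 - r_x M K) / 2`, the map `g` sends `B̄(x₀, r_x)`
into `B(x₀, r_x)`. The Banach fixed point theorem concludes.
-/

open Metric Set Function

theorem existsUnique_mem_ball_isFixedPt {X : Type*} [MetricSpace X] [CompleteSpace X]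
    {g : X → X} {x₀ : X} {r q : ℝ} (hq : q < 1)
    (hg : ∀ a ∈ closedBall x₀ r, ∀ b ∈ closedBall x₀ r, dist (g a) (g b) ≤ q * dist a b)
    (hmaps : MapsTo g (closedBall x₀ r) (ball x₀ r)) (hr : 0 ≤ r) :
    ∃! x, x ∈ ball x₀ r ∧ IsFixedPt g x := by
  have hmaps' : MapsTo g (closedBall x₀ r) (closedBall x₀ r) :=
    hmaps.mono_right ball_subset_closedBall
  have hcontr : ContractingWith q.toNNReal (hmaps'.restrict g _ _) :=
    ⟨Real.toNNReal_lt_one.mpr hq, (LipschitzOnWith.of_dist_le' hg).mapsToRestrict hmaps'⟩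
  obtain ⟨x, hx, hfix, -⟩ := hcontr.exists_fixedPoint' isClosed_closedBall.isComplete hmaps'
    (mem_closedBall_self hr) (edist_ne_top _ _)
  refine ⟨x, ⟨hfix ▸ hmaps hx, hfix⟩, fun x' ⟨hx', hfix'⟩ => ?_⟩
  exact congrArg Subtype.val <| hcontr.fixedPoint_unique'
    (x := ⟨x', ball_subset_closedBall hx'⟩) (y := ⟨x, hx⟩) (Subtype.ext hfix') (Subtype.ext hfix)

section Calculus

variable {E F : Type*} [NormedAddCommGroup E] [NormedSpace ℝ E]
  [NormedAddCommGroup F] [NormedSpace ℝ F]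

theorem norm_sub_le_half_mul_sq_of_norm_hasFDerivAt_le {h : E → F} {h' : E → E →L[ℝ] F}
    {x₀ x : E} {C : ℝ} (hh : ∀ z ∈ segment ℝ x₀ x, HasFDerivAt h (h' z) z)
    (hC : ∀ z ∈ segment ℝ x₀ x, ‖h' z‖ ≤ C * ‖z - x₀‖) :
    ‖h x - h x₀‖ ≤ C * ‖x - x₀‖ ^ 2 / 2 := by
  set v := x - x₀
  have hseg : ∀ t ∈ Icc (0 : ℝ) 1, x₀ + t • v ∈ segment ℝ x₀ x := fun t ht =>
    (segment_eq_image' ℝ x₀ x).symm ▸ mem_image_of_mem _ ht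
  have hline : ∀ t : ℝ, HasDerivAt (fun t : ℝ => x₀ + t • v) v t := fun t => by
    simpa using ((hasDerivAt_id t).smul_const v).const_add x₀
  set φ : ℝ → F := fun t => h (x₀ + t • v) - h x₀
  have hφ : ∀ t ∈ Icc (0 : ℝ) 1, HasDerivAt φ (h' (x₀ + t • v) v) t := fun t ht =>
    ((hh _ (hseg t ht)).comp_hasDerivAt t (hline t)).sub_const _
  have hφ' : ∀ t ∈ Icc (0 : ℝ) 1, ‖h' (x₀ + t • v) v‖ ≤ C * ‖v‖ ^ 2 * t := fun t ht =>
    calc ‖h' (x₀ + t • v) v‖ ≤ C * ‖x₀ + t • v - x₀‖ * ‖v‖ :=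
          ((h' _).le_opNorm v).trans (by gcongr; exact hC _ (hseg t ht))
      _ = C * ‖v‖ ^ 2 * t := by
          rw [add_sub_cancel_left, norm_smul, Real.norm_of_nonneg ht.1]; ring
  have hB : ∀ t : ℝ, HasDerivAt (fun t => C * ‖v‖ ^ 2 / 2 * t ^ 2) (C * ‖v‖ ^ 2 * t) t :=
    fun t => ((hasDerivAt_pow 2 t).const_mul (C * ‖v‖ ^ 2 / 2)).congr_deriv (by norm_num; ring)
  have hφ_le := image_norm_le_of_norm_deriv_right_le_deriv_boundary (a := 0) (b := 1)
    (fun t ht => (hφ t ht).continuousAt.continuousWithinAt)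
    (fun t ht => (hφ t (Ico_subset_Icc_self ht)).hasDerivWithinAt)
    (by simp [φ]) hB (fun t ht => hφ' t (Ico_subset_Icc_self ht)) (right_mem_Icc.mpr zero_le_one)
  simpa [φ, v] using hφ_le

theorem mapsTo_ball_of_norm_hasFDerivAt_le {g : E → E} {g' : E → E →L[ℝ] E} {x₀ : E} {r L : ℝ}
    (hg : ∀ z ∈ closedBall x₀ r, HasFDerivAt g (g' z) z)
    (hg' : ∀ z ∈ closedBall x₀ r, ‖g' z‖ ≤ L * ‖z - x₀‖) (hL : 0 ≤ L)
    (h₀ : ‖g x₀ - x₀‖ < r * (2 - L * r) / 2) :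
    MapsTo g (closedBall x₀ r) (ball x₀ r) := by
  intro x hx
  have hxr : ‖x - x₀‖ ≤ r := mem_closedBall_iff_norm.mp hx
  have hseg : segment ℝ x₀ x ⊆ closedBall x₀ r :=
    (convex_closedBall x₀ r).segment_subset (mem_closedBall_self ((norm_nonneg _).trans hxr)) hx
  have hquad := norm_sub_le_half_mul_sq_of_norm_hasFDerivAt_le
    (fun z hz => hg z (hseg hz)) (fun z hz => hg' z (hseg hz))
  rw [mem_ball_iff_norm]
  calc ‖g x - x₀‖ ≤ ‖g x - g x₀‖ + ‖g x₀ - x₀‖ := norm_sub_le_norm_sub_add_norm_sub _ _ _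
    _ < L * r ^ 2 / 2 + r * (2 - L * r) / 2 := by
        refine add_lt_add_of_le_of_lt (hquad.trans ?_) h₀
        gcongr
    _ = r := by ring

theorem existsUnique_mem_ball_isFixedPt_of_norm_hasFDerivAt_le [CompleteSpace E]
    {g : E → E} {g' : E → E →L[ℝ] E} {x₀ : E} {r L : ℝ}
    (hg : ∀ z ∈ closedBall x₀ r, HasFDerivAt g (g' z) z)
    (hg' : ∀ z ∈ closedBall x₀ r, ‖g' z‖ ≤ L * ‖z - x₀‖) (hL : 0 ≤ L) (hLr : L * r < 1)
    (h₀ : ‖g x₀ - x₀‖ < r * (2 - L * r) / 2) :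
    ∃! x, x ∈ ball x₀ r ∧ IsFixedPt g x := by
  have hr : 0 ≤ r := by nlinarith [norm_nonneg (g x₀ - x₀)]
  refine existsUnique_mem_ball_isFixedPt hLr (fun a ha b hb => ?_)
    (mapsTo_ball_of_norm_hasFDerivAt_le hg hg' hL h₀) hr
  rw [dist_eq_norm, dist_eq_norm]
  refine (convex_closedBall x₀ r).norm_image_sub_le_of_norm_hasFDerivWithin_le
    (fun z hz => (hg z hz).hasFDerivWithinAt) (fun z hz => (hg' z hz).trans ?_) hb ha
  gcongr
  exact mem_closedBall_iff_norm.mp hz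

theorem norm_fderiv_sub_le_of_norm_fderiv_fderiv_le {f : E → F} {x₀ z : E} {R K : ℝ}
    (hf : ∀ x ∈ ball x₀ R, DifferentiableAt ℝ (fderiv ℝ f) x)
    (hK : ∀ x ∈ ball x₀ R, ∀ u v : E, ‖fderiv ℝ (fderiv ℝ f) x u v‖ ≤ K * ‖u‖ * ‖v‖)
    (hK0 : 0 ≤ K) (hz : z ∈ ball x₀ R) :
    ‖fderiv ℝ f z - fderiv ℝ f x₀‖ ≤ K * ‖z - x₀‖ :=
  (convex_ball x₀ R).norm_image_sub_le_of_norm_fderiv_le hf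
    (fun x hx => ContinuousLinearMap.opNorm_le_bound₂ _ hK0 (hK x hx))
    (mem_ball_self (pos_of_mem_ball hz)) hz

def simplifiedNewtonMap (A : E ≃L[ℝ] F) (f : E → F) (y : F) (x : E) : E := x + A.symm (y - f x)

theorem isFixedPt_simplifiedNewtonMap_iff {A : E ≃L[ℝ] F} {f : E → F} {y : F} {x : E} :
    IsFixedPt (simplifiedNewtonMap A f y) x ↔ f x = y := by
  rw [IsFixedPt, simplifiedNewtonMap, add_eq_left, EmbeddingLike.map_eq_zero_iff, sub_eq_zero,
    eq_comm]

theorem hasFDerivAt_simplifiedNewtonMap {A : E ≃L[ℝ] F} {f : E → F} {f' : E →L[ℝ] F}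
    {y : F} {x : E} (hf : HasFDerivAt f f' x) :
    HasFDerivAt (simplifiedNewtonMap A f y)
      ((A.symm : F →L[ℝ] E) ∘L ((A : E →L[ℝ] F) - f')) x := by
  have := (hasFDerivAt_id x).add
    (A.symm.hasFDerivAt.comp x ((hasFDerivAt_const y x).sub hf))
  refine this.congr_fderiv ?_
  ext v
  simp [sub_eq_add_neg]

theorem existsUnique_mem_ball_eq_of_norm_fderiv_sub_le [CompleteSpace E] (A : E ≃L[ℝ] F)
    {f : E → F} {f' : E → E →L[ℝ] F} {x₀ : E} {y : F} {r K : ℝ}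
    (hf : ∀ z ∈ closedBall x₀ r, HasFDerivAt f (f' z) z)
    (hf' : ∀ z ∈ closedBall x₀ r, ‖f' z - A‖ ≤ K * ‖z - x₀‖) (hK : 0 ≤ K)
    (hr : ‖(A.symm : F →L[ℝ] E)‖ * K * r < 1)
    (hy : ‖A.symm (y - f x₀)‖ < r * (2 - ‖(A.symm : F →L[ℝ] E)‖ * K * r) / 2) :
    ∃! x, x ∈ ball x₀ r ∧ f x = y := by
  simp_rw [← isFixedPt_simplifiedNewtonMap_iff (A := A)]
  refine existsUnique_mem_ball_isFixedPt_of_norm_hasFDerivAt_le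
    (fun z hz => hasFDerivAt_simplifiedNewtonMap (hf z hz)) (fun z hz => ?_)
    (by positivity) hr (by simpa [simplifiedNewtonMap] using hy)
  calc _ ≤ ‖(A.symm : F →L[ℝ] E)‖ * ‖(A : E →L[ℝ] F) - f' z‖ :=
        ContinuousLinearMap.opNorm_comp_le _ _
    _ ≤ ‖(A.symm : F →L[ℝ] E)‖ * K * ‖z - x₀‖ := by
        rw [mul_assoc, norm_sub_rev]; gcongr; exact hf' z hz

end Calculus

theorem statement_8_general {n : ℕ}
    {f : (Fin n → ℝ) → (Fin n → ℝ)} (hf : ContDiff ℝ 2 f)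
    {x₀ : Fin n → ℝ}
    (A : (Fin n → ℝ) ≃L[ℝ] (Fin n → ℝ))
    (hA : (A : (Fin n → ℝ) →L[ℝ] (Fin n → ℝ)) = fderiv ℝ f x₀)
    (M : ℝ) (hM : M = ‖(A.symm : (Fin n → ℝ) →L[ℝ] (Fin n → ℝ))‖)
    (R : ℝ)
    (K : ℝ)
    (hK : ∀ x ∈ ball x₀ R, ∀ u v : Fin n → ℝ,
      ‖fderiv ℝ (fderiv ℝ f) x u v‖ ≤ K * ‖u‖ * ‖v‖)
    (W : Submodule ℝ (Fin n → ℝ))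
    (MW : ℝ) (hMW : 0 < MW)
    (hMWbound : ∀ w ∈ W, ‖A.symm w‖ ≤ MW * ‖w‖)
    (rx rW : ℝ) (hrx : 0 < rx) (hrx' : rx < min (1 / (M * K)) R)
    (hrW : rW = rx * (2 - rx * M * K) / (2 * MW)) :
    ∀ y : Fin n → ℝ, y - f x₀ ∈ W → ‖y - f x₀‖ < rW →
      ∃! x, x ∈ ball x₀ rx ∧ f x = y := by
  intro y hyW hy
  have hrxMK : rx < 1 / (M * K) := hrx'.trans_le (min_le_left _ _)
  have hrxR : rx < R := hrx'.trans_le (min_le_right _ _)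
  have hMK : 0 < M * K := by
    by_contra! h
    linarith [one_div_nonpos.mpr h]
  have hK0 : 0 ≤ K := (pos_of_mul_pos_right hMK (hM ▸ norm_nonneg _)).le
  have hfd : Differentiable ℝ f := hf.differentiable (by norm_num)
  have hfd' : Differentiable ℝ (fderiv ℝ f) :=
    (hf.fderiv_right (m := 1) (by norm_num)).differentiable (by norm_num)
  subst hM
  refine existsUnique_mem_ball_eq_of_norm_fderiv_sub_le A (fun z _ => (hfd z).hasFDerivAt)
    (fun z hz => hA ▸ norm_fderiv_sub_le_of_norm_fderiv_fderiv_le (fun x _ => hfd' x) hK hK0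
      (closedBall_subset_ball hrxR hz)) hK0 (by rwa [lt_div_iff₀ hMK, mul_comm] at hrxMK) ?_
  calc ‖A.symm (y - f x₀)‖ ≤ MW * ‖y - f x₀‖ := hMWbound _ hyW
    _ < MW * rW := mul_lt_mul_of_pos_left hy hMW
    _ = _ := by rw [hrW]; field_simp

/-- Directional quantitative inverse function theorem (Proposition 3.11 of the paper):
perturbations of `f x₀` along a subspace `W` of size `< r_W = r_x(2 − r_x M K)/(2 M_W)`
have a unique preimage in `B(x₀, r_x)`. -/
theorem statement_8 {n : ℕ}
    {f : (Fin n → ℝ) → (Fin n → ℝ)} (hf : ContDiff ℝ 2 f)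
    {x₀ : Fin n → ℝ}
    (A : (Fin n → ℝ) ≃L[ℝ] (Fin n → ℝ))
    (hA : (A : (Fin n → ℝ) →L[ℝ] (Fin n → ℝ)) = fderiv ℝ f x₀)
    (M : ℝ) (hM : M = ‖(A.symm : (Fin n → ℝ) →L[ℝ] (Fin n → ℝ))‖)
    (R : ℝ) (hR : 0 < R)
    (K : ℝ)
    (hK : ∀ x ∈ ball x₀ R, ∀ u v : Fin n → ℝ,
      ‖fderiv ℝ (fderiv ℝ f) x u v‖ ≤ K * ‖u‖ * ‖v‖)
    (W : Submodule ℝ (Fin n → ℝ))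
    (MW : ℝ) (hMW : 0 < MW)
    (hMWbound : ∀ w ∈ W, ‖A.symm w‖ ≤ MW * ‖w‖)
    (rx rW : ℝ) (hrx : 0 < rx) (hrx' : rx < min (1 / (M * K)) R)
    (hrW : rW = rx * (2 - rx * M * K) / (2 * MW)) :
    ∀ y : Fin n → ℝ, y - f x₀ ∈ W → ‖y - f x₀‖ < rW →
      ∃! x, x ∈ ball x₀ rx ∧ f x = y :=
  statement_8_general hf A hA M hM R K hK W MW hMW hMWbound rx rW hrx hrx' hrW
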